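/- arXiv:1209.2912 — 7 statements merged into one kernel-verified Lean document; each statement's English description precedes it below -/
import Mathlib

section
/- Let G be a topological space with a distinguished open subset G⁰ and maps r, s : G → G taking values in G⁰ with r(x) = s(x) = x for all x ∈ G⁰, such that r and s restricted to the interior of a given set B are homeomorphisms onto their (open) images. Suppose B ⊆ G is a neighbourhood bisection and D ⊆ B is closed in the subspace topology of B, with B \ interior(B) ⊆ D. Then r(D) is closed in the subspace topology of r(B). -/
/-- An open bisection: an open set `A` such that `r(A)` and `s(A)` are open and `r`, `s`
restrict to homeomorphisms of `A` onto their images (injective, and open as maps on open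
subsets of `A`; continuity of `r` and `s` is assumed separately). -/
def IsOpenBisection {G : Type*} [TopologicalSpace G] (r s : G → G) (A : Set G) : Prop :=
  IsOpen A ∧ IsOpen (r '' A) ∧ IsOpen (s '' A) ∧
  Set.InjOn r A ∧ Set.InjOn s A ∧
  (∀ U ⊆ A, IsOpen U → IsOpen (r '' U)) ∧
  (∀ U ⊆ A, IsOpen U → IsOpen (s '' U))

/-- A neighbourhood bisection. -/
def IsNbhdBisection {G : Type*} [TopologicalSpace G] (G0 : Set G) (r s : G → G)
    (B : Set G) : Prop :=
  B ⊆ closure (interior B) ∧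
  Set.InjOn r B ∧ Set.InjOn s B ∧
  IsOpen (r '' B) ∧ IsOpen (s '' B) ∧
  IsOpenBisection r s (interior B) ∧
  B \ interior B ⊆ ({γ | r γ = s γ} ∩ B) \ G0

/-- If `B` is a neighbourhood bisection, `D ⊆ B` is closed in the subspace topology of `B`,
and `B \ interior B ⊆ D`, then `r(D)` is closed in the subspace topology of `r(B)`. -/
theorem closed_image_of_closed_in_nbhd_bisection
    {G : Type*} [TopologicalSpace G] (G0 : Set G) (r s : G → G)
    (hG0 : IsOpen G0)
    (hr : Continuous r) (hs : Continuous s)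
    (hrmem : ∀ γ : G, r γ ∈ G0) (hsmem : ∀ γ : G, s γ ∈ G0)
    (hrid : ∀ x ∈ G0, r x = x) (hsid : ∀ x ∈ G0, s x = x)
    (B D : Set G) (hB : IsNbhdBisection G0 r s B)
    (hDB : D ⊆ B) (hDclosed : ∃ F : Set G, IsClosed F ∧ D = F ∩ B)
    (hbd : B \ interior B ⊆ D) :
    ∃ F : Set G, IsClosed F ∧ r '' D = F ∩ r '' B := by
  obtain ⟨F0, hF0closed, hDeq⟩ := hDclosed
  obtain ⟨-, hrinj, -, -, -, ⟨-, -, -, -, -, hropen, -⟩, -⟩ := hB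
  have hBD : B \ D = interior B ∩ F0ᶜ := by
    ext γ
    constructor
    · rintro ⟨hγB, hγD⟩
      refine ⟨?_, fun hγF => hγD (hDeq ▸ ⟨hγF, hγB⟩)⟩
      by_contra h
      exact hγD (hbd ⟨hγB, h⟩)
    · rintro ⟨hγi, hγF⟩
      exact ⟨interior_subset hγi, fun hγD => hγF (by rw [hDeq] at hγD; exact hγD.1)⟩
  have hopen : IsOpen (r '' (B \ D)) := by
    rw [hBD]
    exact hropen _ Set.inter_subset_left (isOpen_interior.inter hF0closed.isOpen_compl)
  refine ⟨(r '' (B \ D))ᶜ, hopen.isClosed_compl, ?_⟩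
  ext x
  constructor
  · rintro ⟨γ, hγD, rfl⟩
    refine ⟨fun ⟨δ, hδ, hδr⟩ => ?_, ⟨γ, hDB hγD, rfl⟩⟩
    exact hδ.2 (hrinj hδ.1 (hDB hγD) hδr ▸ hγD)
  · rintro ⟨hxc, γ, hγB, rfl⟩
    refine ⟨γ, ?_, rfl⟩
    by_contra h
    exact hxc ⟨γ, ⟨hγB, h⟩, rfl⟩
end

section
/- Let G be a topological space with data (G⁰, r, s) as in the groupoid encoding, with G⁰ open in G. Suppose G is effective, i.e. Iso(G) \ G⁰ has empty interior in G, and suppose B ⊆ G is a neighbourhood bisection. Then the set r(Iso(B) \ G⁰) has empty interior in G. -/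
/-- If `G` is effective, `G⁰` is open, and `B` is a neighbourhood bisection, then
`r(Iso(B) \ G⁰)` has empty interior in `G`. -/
theorem interior_image_iso_nbhd_bisection_eq_empty
    {G : Type*} [TopologicalSpace G] (G0 : Set G) (r s : G → G)
    (hG0 : IsOpen G0)
    (hr : Continuous r) (hs : Continuous s)
    (hrmem : ∀ γ : G, r γ ∈ G0) (hsmem : ∀ γ : G, s γ ∈ G0)
    (hrid : ∀ x ∈ G0, r x = x) (hsid : ∀ x ∈ G0, s x = x)
    (heff : interior ({γ : G | r γ = s γ} \ G0) = ∅)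
    (B : Set G) (hB : IsNbhdBisection G0 r s B) :
    interior (r '' (({γ : G | r γ = s γ} ∩ B) \ G0)) = ∅ := by
  obtain ⟨hBcl, hrInj, hsInj, -, -, -, -⟩ := hB
  set I : Set G := ({γ : G | r γ = s γ} ∩ B) \ G0 with hI
  set U : Set G := interior (r '' I) with hU
  by_contra hne
  obtain ⟨x, hx⟩ := Set.nonempty_iff_ne_empty.2 hne
  obtain ⟨γ, hγI, hγx⟩ := interior_subset hx
  -- r⁻¹(U) is an open neighbourhood of γ, and γ ∈ B ⊆ closure (interior B)
  have hγB : γ ∈ B := hγI.1.2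
  have hγcl : γ ∈ closure (interior B) := hBcl hγB
  have hopen : IsOpen (r ⁻¹' U) := isOpen_interior.preimage hr
  have hγpre : γ ∈ r ⁻¹' U := by simp [Set.mem_preimage, hγx, hx]
  obtain ⟨δ, hδpre, hδint⟩ := (mem_closure_iff.mp hγcl) (r ⁻¹' U) hopen hγpre
  -- V := r⁻¹(U) ∩ interior B is open, nonempty, and contained in Iso \ G0
  have hVsub : r ⁻¹' U ∩ interior B ⊆ {γ : G | r γ = s γ} \ G0 := by
    rintro δ' ⟨hδ'U, hδ'int⟩
    obtain ⟨γ', hγ'I, hγ'eq⟩ := interior_subset hδ'U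
    have : δ' = γ' := hrInj (interior_subset hδ'int) hγ'I.1.2 hγ'eq.symm
    subst this
    exact ⟨hγ'I.1.1, hγ'I.2⟩
  have : δ ∈ interior ({γ : G | r γ = s γ} \ G0) :=
    mem_interior.mpr ⟨r ⁻¹' U ∩ interior B, hVsub,
      hopen.inter isOpen_interior, ⟨hδpre, hδint⟩⟩
  rw [heff] at this
  exact this
end

section
/- Let G be a topological space with data (G⁰, r, s) as in the groupoid encoding, with G⁰ open in G and with the isotropy set Iso(G) = {γ ∈ G : r(γ) = s(γ)} closed in G (this holds automatically when the subspace G⁰ is Hausdorff, since r and s are continuous and take values in G⁰). Suppose G is effective and B ⊆ G is a neighbourhood bisection. Then the closure of r(Iso(B) \ G⁰) has empty interior in G. -/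
/-- If `G` is effective, `G⁰` is open, `Iso(G)` is closed, and `B` is a neighbourhood
bisection, then the closure of `r(Iso(B) \ G⁰)` has empty interior in `G`. -/
theorem interior_closure_image_iso_nbhd_bisection_eq_empty
    {G : Type*} [TopologicalSpace G] (G0 : Set G) (r s : G → G)
    (hG0 : IsOpen G0)
    (hr : Continuous r) (hs : Continuous s)
    (hrmem : ∀ γ : G, r γ ∈ G0) (hsmem : ∀ γ : G, s γ ∈ G0)
    (hrid : ∀ x ∈ G0, r x = x) (hsid : ∀ x ∈ G0, s x = x)
    (hIso : IsClosed {γ : G | r γ = s γ})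
    (heff : interior ({γ : G | r γ = s γ} \ G0) = ∅)
    (B : Set G) (hB : IsNbhdBisection G0 r s B) :
    interior (closure (r '' (({γ : G | r γ = s γ} ∩ B) \ G0))) = ∅ := by

  obtain ⟨hBcl, hrinj, hsinj, hrB, hsB, ⟨hAopen, _, _, _, _, hropen, _⟩, hbd⟩ := hB
  set A := interior B with hA
  set K := (({γ : G | r γ = s γ} ∩ B) \ G0) with hKdef
  set U := interior (closure (r '' K)) with hUdef
  have hUopen : IsOpen U := isOpen_interior
  -- W ⊆ closure K
  have hWsub : A ∩ r ⁻¹' U ⊆ closure K := by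
    rintro δ ⟨hδA, hδU⟩
    rw [mem_closure_iff]
    intro N hN hδN
    have h1 : IsOpen (r '' (N ∩ A)) :=
      hropen (N ∩ A) Set.inter_subset_right (hN.inter hAopen)
    have h2 : r δ ∈ closure (r '' K) := interior_subset hδU
    have h3 : r δ ∈ r '' (N ∩ A) := ⟨δ, ⟨hδN, hδA⟩, rfl⟩
    rw [mem_closure_iff] at h2
    obtain ⟨x, hx1, hx2⟩ := h2 _ h1 h3
    obtain ⟨δ', hδ'NA, hδ'x⟩ := hx1
    obtain ⟨γ, hγK, hγx⟩ := hx2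
    have hδγ : δ' = γ :=
      hrinj (interior_subset hδ'NA.2) hγK.1.2 (hδ'x.trans hγx.symm)
    exact ⟨δ', hδ'NA.1, hδγ ▸ hγK⟩
  have hclK : closure K ⊆ {γ : G | r γ = s γ} \ G0 :=
    closure_minimal (fun γ hγ => ⟨hγ.1.1, hγ.2⟩) (hIso.sdiff hG0)
  have hW : A ∩ r ⁻¹' U = ∅ := by
    have hopen : IsOpen (A ∩ r ⁻¹' U) := hAopen.inter (hUopen.preimage hr)
    have h := interior_maximal (hWsub.trans hclK) hopen
    rw [heff] at h
    exact Set.subset_empty_iff.mp h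
  rw [Set.eq_empty_iff_forall_notMem]
  intro x hxU
  have hx : x ∈ closure (r '' K) := interior_subset hxU
  obtain ⟨y, hyU, hyK⟩ := (mem_closure_iff.mp hx) U hUopen hxU
  obtain ⟨γ, hγK, rfl⟩ := hyK
  have hγB : γ ∈ closure A := hBcl hγK.1.2
  obtain ⟨δ, hδ1, hδ2⟩ := (mem_closure_iff.mp hγB) _ (hUopen.preimage hr) hyU
  exact absurd (hW ▸ (⟨hδ2, hδ1⟩ : δ ∈ A ∩ r ⁻¹' U)) (Set.notMem_empty δ)
end

section
/- Let G be a topological space with data (G⁰, r, s) as in the groupoid encoding. Assume: (i) the subtype G⁰, with the subspace topology, is a Baire space and is Hausdorff (both hold, for instance, when G⁰ carries a complete metric inducing the subspace topology); and (ii) there is a countable family {B_n} of neighbourhood bisections of G with ⋃_n B_n = G. If G is effective, then G is topologically principal. -/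
/-- If the unit space is a Hausdorff Baire space and `G` has a countable cover by
neighbourhood bisections, then effective implies topologically principal. -/
theorem effective_implies_topologically_principal
    {G : Type*} [TopologicalSpace G] (G0 : Set G) (r s : G → G)
    (hr : Continuous r) (hs : Continuous s)
    (hrmem : ∀ γ : G, r γ ∈ G0) (hsmem : ∀ γ : G, s γ ∈ G0)
    (hrid : ∀ x ∈ G0, r x = x) (hsid : ∀ x ∈ G0, s x = x)
    [BaireSpace ↥G0] [T2Space ↥G0]
    (B : ℕ → Set G) (hB : ∀ n, IsNbhdBisection G0 r s (B n))
    (hcov : ⋃ n, B n = Set.univ)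
    (heff : interior ({γ : G | r γ = s γ} \ G0) = ∅) :
    interior {x : ↥G0 | ∃ γ : G, γ ∉ G0 ∧ r γ = ↑x ∧ s γ = ↑x} = ∅ := by
  classical
  -- The isotropy set is closed, since the unit space is Hausdorff.
  have hIsoClosed : IsClosed {γ : G | r γ = s γ} := by
    have : {γ : G | r γ = s γ} =
        (fun γ => ((⟨r γ, hrmem γ⟩ : ↥G0), (⟨s γ, hsmem γ⟩ : ↥G0))) ⁻¹'
          (Set.diagonal ↥G0) := by
      ext γ
      simp [Set.diagonal, Subtype.ext_iff, eq_comm]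
    rw [this]
    exact isClosed_diagonal.preimage (by fun_prop)
  -- For each n, the s-image of the "bad" isotropy in `B n`.
  set S : ℕ → Set G := fun n => s '' {γ | γ ∈ B n ∧ r γ = s γ ∧ γ ∉ G0} with hS
  -- S n is disjoint from B n
  have hSB : ∀ n, ∀ x ∈ S n, x ∉ B n := by
    intro n x hx hxB
    obtain ⟨γ, ⟨hγB, hγiso, hγnot⟩, hγs⟩ := hx
    have hxG0 : x ∈ G0 := hγs ▸ hsmem γ
    have : x = γ := (hB n).2.2.1 hxB hγB (by rw [hsid x hxG0, hγs])
    exact hγnot (this ▸ hxG0)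
  -- key step: no nonempty open subset of G is contained in closure (S n)
  have hkey : ∀ n, ∀ W : Set G, IsOpen W → W ⊆ closure (S n) → W = ∅ := by
    intro n W hWopen hWsub
    by_contra hWne
    obtain ⟨x, hx⟩ := Set.nonempty_iff_ne_empty.mpr hWne
    set A : Set G := interior (B n) with hA
    obtain ⟨hcl, hrinj, hsinj, hrO, hsO, hbis, hrem⟩ := hB n
    obtain ⟨hAopen, hrAO, hsAO, hrAinj, hsAinj, hrmap, hsmap⟩ := hbis
    -- get a point of S n in W
    obtain ⟨y, hyW, hyS⟩ := mem_closure_iff.mp (hWsub hx) W hWopen hx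
    obtain ⟨γ₀, hγ₀, hγ₀s⟩ := hyS
    -- γ₀ ∈ closure A, so there is δ ∈ A with s δ ∈ W
    have hγ₀cl : γ₀ ∈ closure A := hcl hγ₀.1
    have hγ₀W : γ₀ ∈ s ⁻¹' W := by simp [Set.mem_preimage, hγ₀s, hyW]
    obtain ⟨δ, hδW, hδA⟩ :=
      mem_closure_iff.mp hγ₀cl (s ⁻¹' W) (hWopen.preimage hs) hγ₀W
    -- W₂ : open, nonempty, contained in closure (S n) and in s '' A
    set W₂ : Set G := W ∩ s '' A with hW₂
    have hW₂open : IsOpen W₂ := hWopen.inter hsAO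
    have hW₂ne : W₂.Nonempty := ⟨s δ, hδW, δ, hδA, rfl⟩
    have hW₂cl : W₂ ⊆ closure (S n) := fun z hz => hWsub hz.1
    -- closure (S n) is disjoint from s '' (A \ Iso)
    have hANIopen : IsOpen (s '' (A \ {γ | r γ = s γ})) :=
      hsmap _ Set.diff_subset (hAopen.sdiff hIsoClosed)
    have hdisj1 : Disjoint (s '' (A \ {γ | r γ = s γ})) (S n) := by
      rw [Set.disjoint_left]
      rintro z ⟨δ', ⟨hδ'A, hδ'ni⟩, hδ's⟩ ⟨γ, ⟨hγB, hγiso, _⟩, hγs⟩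
      have : δ' = γ := hsinj (interior_subset hδ'A) hγB (by rw [hδ's, hγs])
      exact hδ'ni (by simpa [this] using hγiso)
    have hdisj1' : Disjoint (s '' (A \ {γ | r γ = s γ})) (closure (S n)) :=
      hdisj1.closure_right hANIopen
    -- closure (S n) is disjoint from A
    have hdisj2 : Disjoint A (closure (S n)) := by
      refine (Set.disjoint_left.mpr ?_).closure_right hAopen
      intro z hzA hzS
      exact hSB n z hzS (interior_subset hzA)
    -- so every point of W₂ is in s '' (A ∩ Iso)
    have hW₂F : W₂ ⊆ s '' (A ∩ {γ | r γ = s γ}) := by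
      intro z hz
      obtain ⟨δ', hδ'A, hδ's⟩ := hz.2
      refine ⟨δ', ⟨hδ'A, ?_⟩, hδ's⟩
      by_contra hni
      exact hdisj1'.ne_of_mem ⟨δ', ⟨hδ'A, hni⟩, hδ's⟩ (hW₂cl hz) rfl
    -- the open set U
    set U : Set G := A ∩ s ⁻¹' W₂ with hU
    have hUopen : IsOpen U := hAopen.inter (hW₂open.preimage hs)
    have hUne : U.Nonempty := by
      obtain ⟨z, hzW, δ', hδ'A, hδ's⟩ := hW₂ne
      refine ⟨δ', hδ'A, ?_⟩
      show s δ' ∈ W₂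
      rw [hδ's]
      exact ⟨hzW, δ', hδ'A, hδ's⟩
    have hUiso : U ⊆ {γ | r γ = s γ} := by
      rintro γ ⟨hγA, hγW⟩
      obtain ⟨δ', ⟨hδ'A, hδ'iso⟩, hδ's⟩ := hW₂F hγW
      have : δ' = γ := hsinj (interior_subset hδ'A) (interior_subset hγA) hδ's
      exact this ▸ hδ'iso
    have hUG0 : ∀ γ ∈ U, γ ∉ G0 := by
      rintro γ ⟨hγA, hγW⟩ hγG0
      have : γ ∈ W₂ := by
        have h1 : s γ = γ := hsid γ hγG0
        have h2 : s γ ∈ W₂ := hγW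
        rwa [h1] at h2
      exact hdisj2.ne_of_mem hγA (hW₂cl this) rfl
    -- contradiction with effectiveness
    obtain ⟨γ, hγ⟩ := hUne
    have hUsub : U ⊆ {γ : G | r γ = s γ} \ G0 := by
      intro z hz
      exact ⟨hUiso hz, hUG0 z hz⟩
    have : γ ∈ interior ({γ : G | r γ = s γ} \ G0) :=
      interior_maximal hUsub hUopen hγ
    rw [heff] at this
    exact this
  -- The sets T n in the unit space: preimages of closure (S n)
  set T : ℕ → Set ↥G0 := fun n => (fun x : ↥G0 => (x : G)) ⁻¹' closure (S n) with hT
  have hTclosed : ∀ n, IsClosed (T n) := fun n =>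
    isClosed_closure.preimage continuous_subtype_val
  have hTint : ∀ n, interior (T n) = ∅ := by
    intro n
    by_contra hne
    obtain ⟨x, hx⟩ := Set.nonempty_iff_ne_empty.mpr hne
    obtain ⟨V, hVsub, hVopen, hxV⟩ := isOpen_iff_forall_mem_open.mp isOpen_interior x hx
    obtain ⟨W', hW'open, hW'eq⟩ := isOpen_induced_iff.mp hVopen
    have hW'T : (fun x : ↥G0 => (x : G)) ⁻¹' W' ⊆ T n := by
      intro y hy
      exact interior_subset (hVsub (hW'eq ▸ hy))
    have hxW' : (x : G) ∈ W' := by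
      have : x ∈ (fun x : ↥G0 => (x : G)) ⁻¹' W' := hW'eq ▸ hxV
      exact this
    -- W' ∩ s '' (B n) is open, nonempty, contained in closure (S n)
    have hxcl : (x : G) ∈ closure (S n) := hW'T hxW'
    obtain ⟨y, hyW', hyS⟩ := mem_closure_iff.mp hxcl W' hW'open hxW'
    have hysB : y ∈ s '' (B n) := by
      obtain ⟨γ, hγ, hγs⟩ := hyS
      exact ⟨γ, hγ.1, hγs⟩
    have hsub : W' ∩ s '' (B n) ⊆ closure (S n) := by
      rintro z ⟨hzW', γ, hγB, hγs⟩
      have hzG0 : z ∈ G0 := hγs ▸ hsmem γ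
      exact hW'T (show (⟨z, hzG0⟩ : ↥G0) ∈ _ from hzW')
    have := hkey n (W' ∩ s '' (B n)) (hW'open.inter (hB n).2.2.2.2.1) hsub
    rw [Set.eq_empty_iff_forall_notMem] at this
    exact this y ⟨hyW', hysB⟩
  -- each T n is meagre
  have hTmeagre : ∀ n, IsMeagre (T n) := by
    intro n
    have : Dense (T n)ᶜ := interior_eq_empty_iff_dense_compl.mp (hTint n)
    exact residual_of_dense_open (hTclosed n).isOpen_compl this
  -- the target set is contained in ⋃ T n
  have hsubT : {x : ↥G0 | ∃ γ : G, γ ∉ G0 ∧ r γ = ↑x ∧ s γ = ↑x} ⊆ ⋃ n, T n := by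
    rintro x ⟨γ, hγnot, hγr, hγs⟩
    have : γ ∈ ⋃ n, B n := hcov ▸ Set.mem_univ γ
    obtain ⟨n, hn⟩ := Set.mem_iUnion.mp this
    refine Set.mem_iUnion.mpr ⟨n, subset_closure ⟨γ, ⟨hn, by rw [hγr, hγs], hγnot⟩, hγs⟩⟩
  have hmeagre : IsMeagre {x : ↥G0 | ∃ γ : G, γ ∉ G0 ∧ r γ = ↑x ∧ s γ = ↑x} :=
    (isMeagre_iUnion hTmeagre).mono hsubT
  rw [interior_eq_empty_iff_dense_compl]
  exact dense_of_mem_residual hmeagre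
end

section
/- Let G be a topological space with data (G⁰, r, s) as in the groupoid encoding. Assume: (i) the subtype G⁰, with the subspace topology, is a Baire space and is Hausdorff (both hold, for instance, when G⁰ carries a complete metric inducing the subspace topology); and (ii) there is a countable family {A_n} of open bisections of G with ⋃_n A_n = G. If G is effective, then G is topologically principal. -/
/-- If the unit space is a Hausdorff Baire space and `G` has a countable cover by
open bisections, then effective implies topologically principal. -/
theorem effective_implies_topologically_principal_of_open_bisections
    {G : Type*} [TopologicalSpace G] (G0 : Set G) (r s : G → G)
    (hr : Continuous r) (hs : Continuous s)
    (hrmem : ∀ γ : G, r γ ∈ G0) (hsmem : ∀ γ : G, s γ ∈ G0)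
    (hrid : ∀ x ∈ G0, r x = x) (hsid : ∀ x ∈ G0, s x = x)
    [BaireSpace ↥G0] [T2Space ↥G0]
    (A : ℕ → Set G) (hA : ∀ n, IsOpenBisection r s (A n))
    (hcov : ⋃ n, A n = Set.univ)
    (heff : interior ({γ : G | r γ = s γ} \ G0) = ∅) :
    interior {x : ↥G0 | ∃ γ : G, γ ∉ G0 ∧ r γ = ↑x ∧ s γ = ↑x} = ∅ := by
  classical
  set T : ℕ → Set ↥G0 :=
    fun n => {x | ∃ γ ∈ A n, γ ∉ G0 ∧ r γ = ↑x ∧ s γ = ↑x} with hTdef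
  have hset : {x : ↥G0 | ∃ γ : G, γ ∉ G0 ∧ r γ = ↑x ∧ s γ = ↑x} = ⋃ n, T n := by
    ext x
    simp only [Set.mem_setOf_eq, Set.mem_iUnion, hTdef]
    constructor
    · rintro ⟨γ, hγ, hrγ, hsγ⟩
      have : γ ∈ ⋃ n, A n := by rw [hcov]; exact Set.mem_univ γ
      obtain ⟨n, hn⟩ := Set.mem_iUnion.mp this
      exact ⟨n, γ, hn, hγ, hrγ, hsγ⟩
    · rintro ⟨n, γ, _, hγ, hrγ, hsγ⟩; exact ⟨γ, hγ, hrγ, hsγ⟩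
  rw [hset]
  -- key emptiness lemma
  have key : ∀ n, ∀ O : Set ↥G0, IsOpen O → O ⊆ closure (T n) →
      (∀ y ∈ T n, y ∉ O) → O = ∅ := by
    intro n O hO hsub hdis
    have h1 : closure (T n) ⊆ Oᶜ :=
      closure_minimal (fun y hy => hdis y hy) (isClosed_compl_iff.mpr hO)
    have : O ⊆ Oᶜ := fun y hy => h1 (hsub hy)
    ext y; exact ⟨fun hy => (this hy) hy, fun hy => hy.elim⟩
  -- each T n is nowhere dense
  have hND : ∀ n, IsNowhereDense (T n) := by
    intro n
    obtain ⟨hAopen, hrAopen, hsAopen, hrInj, hsInj, hrimg, hsimg⟩ := hA n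
    by_contra hne
    rw [IsNowhereDense, ← Ne, ← Set.nonempty_iff_ne_empty] at hne
    obtain ⟨x₀, hx₀⟩ := hne
    set V : Set ↥G0 := interior (closure (T n)) with hVdef
    have hVopen : IsOpen V := isOpen_interior
    have hVsub : V ⊆ closure (T n) := interior_subset
    -- V meets T n
    have hmeet : (V ∩ T n).Nonempty := by
      have hx₀cl : x₀ ∈ closure (T n) := hVsub hx₀
      rcases (mem_closure_iff.mp hx₀cl) V hVopen hx₀ with ⟨y, hyV, hyT⟩
      exact ⟨y, hyV, hyT⟩
    set Uhat : Set ↥G0 := Subtype.val ⁻¹' (r '' A n) with hUhatdef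
    have hUhatOpen : IsOpen Uhat := hrAopen.preimage continuous_subtype_val
    have hTsubUhat : T n ⊆ Uhat := by
      rintro y ⟨γ, hγA, _, hrγ, _⟩
      exact ⟨γ, hγA, hrγ⟩
    set V' : Set ↥G0 := V ∩ Uhat with hV'def
    have hV'open : IsOpen V' := hVopen.inter hUhatOpen
    obtain ⟨Ω, hΩopen, hΩeq⟩ := isOpen_induced_iff.mp hV'open
    -- the "agreement" set F
    set F : Set ↥G0 := {x | ∀ γ ∈ A n, r γ = ↑x → s γ = ↑x} with hFdef
    have hTF : T n ⊆ F := by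
      rintro y ⟨γ₀, hγ₀A, hγ₀, hrγ₀, hsγ₀⟩ γ hγA hrγ
      have : γ = γ₀ := hrInj hγA hγ₀A (by rw [hrγ, hrγ₀])
      rw [this, hsγ₀]
    -- Uhat \ F is open
    have hUFopen : IsOpen (Uhat \ F) := by
      rw [isOpen_iff_forall_mem_open]
      rintro x ⟨hxU, hxF⟩
      simp only [hFdef, Set.mem_setOf_eq, not_forall] at hxF
      obtain ⟨γ, hγA, hrγ, hsγ⟩ := hxF
      have hne : (⟨s γ, hsmem γ⟩ : ↥G0) ≠ x := fun h => hsγ (congrArg Subtype.val h)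
      obtain ⟨P, Q, hP, hQ, hsP, hxQ, hPQ⟩ := t2_separation hne
      obtain ⟨P', hP'open, hP'eq⟩ := isOpen_induced_iff.mp hP
      obtain ⟨Q', hQ'open, hQ'eq⟩ := isOpen_induced_iff.mp hQ
      refine ⟨Subtype.val ⁻¹' (r '' (A n ∩ s ⁻¹' P') ∩ Q'), ?_, ?_, ?_⟩
      · rintro y ⟨⟨γ', ⟨hγ'A, hγ's⟩, hrγ'⟩, hyQ'⟩
        refine ⟨⟨γ', hγ'A, hrγ'⟩, ?_⟩
        intro hyF
        have hsy : s γ' = ↑y := hyF γ' hγ'A hrγ'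
        have h1 : (⟨s γ', hsmem γ'⟩ : ↥G0) ∈ P := by rw [← hP'eq]; exact hγ's
        have h2 : y ∈ Q := by rw [← hQ'eq]; exact hyQ'
        have h3 : (⟨s γ', hsmem γ'⟩ : ↥G0) = y := Subtype.ext hsy
        rw [h3] at h1
        exact Set.disjoint_iff.mp hPQ ⟨h1, h2⟩ 
      · exact ((hrimg _ (by intro z hz; exact hz.1)
          (hAopen.inter (hP'open.preimage hs))).inter hQ'open).preimage
          continuous_subtype_val
      · obtain ⟨γ'', hγ''A, hrγ''⟩ := hxU
        have hγ''γ : γ'' = γ := hrInj hγ''A hγA (by rw [hrγ'', hrγ])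
        refine ⟨⟨γ, ⟨hγA, ?_⟩, hrγ⟩, ?_⟩
        · have : (⟨s γ, hsmem γ⟩ : ↥G0) ∈ P := hsP
          rw [← hP'eq] at this; exact this
        · have : x ∈ Q := hxQ
          rw [← hQ'eq] at this; exact this
    -- V' ⊆ F
    have hV'F : V' ⊆ F := by
      intro x hxV'
      by_contra hxF
      have : V' ∩ (Uhat \ F) = ∅ := by
        apply key n _ (hV'open.inter hUFopen)
          (fun y hy => hVsub hy.1.1)
        rintro y hyT ⟨_, _, hyF⟩
        exact hyF (hTF hyT)
      exact absurd this (Set.nonempty_iff_ne_empty.mp ⟨x, hxV', hxV'.2, hxF⟩)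
    -- V' contains no point of A n
    have hV'A : V' ∩ (Subtype.val ⁻¹' A n) = ∅ := by
      apply key n _ (hV'open.inter (hAopen.preimage continuous_subtype_val))
        (fun y hy => hVsub hy.1.1)
      rintro y ⟨γ, hγA, hγ, hrγ, hsγ⟩ ⟨_, hyA⟩
      have hry : r (↑y : G) = ↑y := hrid _ y.2
      have : γ = ↑y := hrInj hγA hyA (by rw [hrγ, hry])
      exact hγ (this ▸ y.2)
    -- the open set W
    set W : Set G := A n ∩ r ⁻¹' Ω with hWdef
    have hWopen : IsOpen W := hAopen.inter (hΩopen.preimage hr)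
    have hWsub : W ⊆ {γ : G | r γ = s γ} \ G0 := by
      rintro γ ⟨hγA, hγΩ⟩
      have hxV' : (⟨r γ, hrmem γ⟩ : ↥G0) ∈ V' := by rw [← hΩeq]; exact hγΩ
      have hsr : s γ = r γ := hV'F hxV' γ hγA rfl
      refine ⟨hsr.symm, ?_⟩
      intro hγG0
      have hrγ : r γ = γ := hrid γ hγG0
      have : (⟨r γ, hrmem γ⟩ : ↥G0) ∈ V' ∩ (Subtype.val ⁻¹' A n) :=
        ⟨hxV', by simpa [hrγ] using hγA⟩
      rw [hV'A] at this
      exact this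
    have hWempty : W = ∅ := by
      have : W ⊆ interior ({γ : G | r γ = s γ} \ G0) :=
        interior_maximal hWsub hWopen
      rw [heff] at this
      exact Set.eq_empty_iff_forall_notMem.mpr fun γ hγ => this hγ
    obtain ⟨x₁, hx₁V, γ₁, hγ₁A, hγ₁, hrγ₁, hsγ₁⟩ := hmeet
    have hx₁V' : x₁ ∈ V' := ⟨hx₁V, ⟨γ₁, hγ₁A, hrγ₁⟩⟩
    have hγ₁W : γ₁ ∈ W := by
      refine ⟨hγ₁A, ?_⟩
      have : x₁ ∈ Subtype.val ⁻¹' Ω := by rw [hΩeq]; exact hx₁V'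
      simpa [hrγ₁] using this
    rw [hWempty] at hγ₁W
    exact hγ₁W
  -- finish with Baire
  have hMeagre : IsMeagre (⋃ n, T n) := by
    apply isMeagre_iUnion
    intro n
    rw [isMeagre_iff_countable_union_isNowhereDense]
    exact ⟨{T n}, by simpa using hND n, Set.countable_singleton _, by simp⟩
  have hdense : Dense (⋃ n, T n)ᶜ := dense_of_mem_residual hMeagre
  exact interior_eq_empty_iff_dense_compl.mpr hdense
end

section
/- Suppose the following holds: for every topological space G with data (G⁰, r, s) as in the groupoid encoding such that (i) the subtype G⁰ with the subspace topology admits a complete metric inducing that topology, and (ii) G has a countable cover by neighbourhood bisections, effectiveness of G implies that G is topologically principal. Then the Baire Category Theorem holds: for every complete metric space X and every countable collection {C_n} of closed subsets of X each with empty interior, the union ⋃_n C_n has empty interior. -/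
open Set Topology TopologicalSpace

section Bisection

variable {G : Type*} [TopologicalSpace G] {r s : G → G} {A : Set G}

theorem isOpenBisection_of_isOpenMap (hA : IsOpen A) (hr : IsOpenMap r) (hs : IsOpenMap s)
    (hrA : InjOn r A) (hsA : InjOn s A) : IsOpenBisection r s A :=
  ⟨hA, hr A hA, hs A hA, hrA, hsA, fun U _ hU => hr U hU, fun U _ hU => hs U hU⟩

theorem IsOpenBisection.isNbhdBisection (G0 : Set G) (hA : IsOpenBisection r s A) :
    IsNbhdBisection G0 r s A := by
  rw [IsNbhdBisection, hA.1.interior_eq, Set.sdiff_self]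
  exact ⟨subset_closure, hA.2.2.2.1, hA.2.2.2.2.1, hA.2.1, hA.2.2.1, hA, empty_subset _⟩

end Bisection

universe u

/-- The points of `X` together with one isotropy arrow over each `x ∈ C n`, for every `n`. -/
inductive BaireGroupoid {X : Type u} (C : ℕ → Set X) : Type u
  | unit : X → BaireGroupoid C
  | arr : (n : ℕ) → (x : X) → x ∈ C n → BaireGroupoid C

namespace BaireGroupoid

variable {X : Type u} {C : ℕ → Set X}

def base : BaireGroupoid C → X
  | unit x => x
  | arr _ x _ => x

/-- Both the range and the source map: every arrow is isotropy. -/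
def rg (γ : BaireGroupoid C) : BaireGroupoid C := unit (base γ)

theorem unit_injective : Function.Injective (unit : X → BaireGroupoid C) := fun _ _ h => by
  injection h

open Classical in
/-- Sheet `0` is the unit space; sheet `n + 1` is a copy of `X` with the points of `C n` replaced
by arrows. -/
noncomputable def sheet : ℕ → X → BaireGroupoid C
  | 0 => unit
  | n + 1 => fun x => if h : x ∈ C n then arr n x h else unit x

@[simp]
theorem base_sheet (n : ℕ) (x : X) : base (sheet (C := C) n x) = x := by
  cases n with
  | zero => rfl
  | succ n => by_cases h : x ∈ C n <;> simp [sheet, h, base]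

@[simp]
theorem rg_sheet (n : ℕ) (x : X) : rg (sheet (C := C) n x) = unit x := by
  simp [rg]

theorem injOn_rg_range_sheet (n : ℕ) : InjOn rg (range (sheet (C := C) n)) := by
  rintro _ ⟨x, rfl⟩ _ ⟨y, rfl⟩ h
  rw [rg_sheet, rg_sheet] at h
  rw [unit_injective h]

theorem iUnion_range_sheet : ⋃ n, range (sheet (C := C) n) = univ := by
  refine eq_univ_of_forall fun γ => mem_iUnion.2 ?_
  cases γ with
  | unit x => exact ⟨0, x, rfl⟩
  | arr n x h => exact ⟨n + 1, x, by simp [sheet, h]⟩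

variable [TopologicalSpace X]

theorem isOpen_setOf_sheet_eq (hC : ∀ n, IsClosed (C n)) (m n : ℕ) :
    IsOpen {x | sheet (C := C) m x = sheet n x} := by
  cases m with
  | zero => cases n with
    | zero => simp
    | succ n =>
      convert (hC n).isOpen_compl using 1
      ext x; by_cases hx : x ∈ C n <;> simp [sheet, hx]
  | succ m => cases n with
    | zero =>
      convert (hC m).isOpen_compl using 1
      ext x; by_cases hx : x ∈ C m <;> simp [sheet, hx]
    | succ n =>
      rcases eq_or_ne m n with rfl | hmn
      · simp
      · convert (hC m).isOpen_compl.inter (hC n).isOpen_compl using 1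
        ext x
        by_cases hm : x ∈ C m <;> by_cases hn : x ∈ C n <;> simp [sheet, hm, hn, hmn]

noncomputable instance : TopologicalSpace (BaireGroupoid C) := ⨆ n, .coinduced (sheet n) ‹_›

theorem isOpen_iff {O : Set (BaireGroupoid C)} : IsOpen O ↔ ∀ n, IsOpen (sheet n ⁻¹' O) := by
  simp only [isOpen_iSup_iff, isOpen_coinduced]

theorem continuous_sheet (n : ℕ) : Continuous (sheet (C := C) n) :=
  continuous_iff_coinduced_le.2 (le_iSup (fun n => TopologicalSpace.coinduced (sheet n) _) n)

theorem continuous_base : Continuous (base : BaireGroupoid C → X) :=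
  continuous_def.2 fun U hU => isOpen_iff.2 fun n => by
    simpa [preimage_preimage] using hU

theorem continuous_rg : Continuous (rg : BaireGroupoid C → _) :=
  (continuous_sheet 0).comp continuous_base

theorem isOpenMap_base : IsOpenMap (base : BaireGroupoid C → X) := by
  intro O hO
  have hO_image : base '' O = ⋃ n, sheet n ⁻¹' O := by
    ext x
    constructor
    · rintro ⟨γ, hγ, rfl⟩
      obtain ⟨n, y, rfl⟩ := mem_iUnion.1 (iUnion_range_sheet (C := C) ▸ mem_univ γ)
      exact mem_iUnion.2 ⟨n, by simpa⟩
    · intro hx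
      obtain ⟨n, hn⟩ := mem_iUnion.1 hx
      exact ⟨_, hn, base_sheet n x⟩
  rw [hO_image]
  exact isOpen_iUnion fun n => isOpen_iff.1 hO n

theorem isOpenMap_sheet (hC : ∀ n, IsClosed (C n)) (n : ℕ) : IsOpenMap (sheet (C := C) n) := by
  intro U hU
  refine isOpen_iff.2 fun m => ?_
  have hpreimage :
      sheet (C := C) m ⁻¹' (sheet n '' U) = U ∩ {x | sheet (C := C) m x = sheet n x} := by
    ext x
    constructor
    · rintro ⟨y, hy, hyx⟩
      obtain rfl : y = x := by simpa using congrArg base hyx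
      exact ⟨hy, hyx.symm⟩
    · rintro ⟨hx, hxe⟩
      exact ⟨x, hx, hxe.symm⟩
  rw [hpreimage]
  exact hU.inter (isOpen_setOf_sheet_eq hC m n)

theorem isOpenMap_rg (hC : ∀ n, IsClosed (C n)) : IsOpenMap (rg : BaireGroupoid C → _) :=
  (isOpenMap_sheet hC 0).comp isOpenMap_base

theorem isOpenBisection_range_sheet (hC : ∀ n, IsClosed (C n)) (n : ℕ) :
    IsOpenBisection rg rg (range (sheet (C := C) n)) :=
  isOpenBisection_of_isOpenMap (isOpenMap_sheet hC n).isOpen_range (isOpenMap_rg hC)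
    (isOpenMap_rg hC) (injOn_rg_range_sheet n) (injOn_rg_range_sheet n)

theorem isEmbedding_unit : IsEmbedding (unit : X → BaireGroupoid C) :=
  Function.LeftInverse.isEmbedding (f := base) (fun _ => rfl) continuous_base (continuous_sheet 0)

noncomputable def unitsHomeomorph : X ≃ₜ range (unit : X → BaireGroupoid C) :=
  isEmbedding_unit.toHomeomorph

instance [IsCompletelyMetrizableSpace X] :
    IsCompletelyMetrizableSpace (range (unit : X → BaireGroupoid C)) :=
  unitsHomeomorph.symm.isClosedEmbedding.IsCompletelyMetrizableSpace

theorem dense_range_unit (hCi : ∀ n, interior (C n) = ∅) :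
    Dense (range (unit : X → BaireGroupoid C)) := by
  suffices interior (range (unit : X → BaireGroupoid C))ᶜ = ∅ by
    simpa using interior_eq_empty_iff_dense_compl.1 this
  rw [eq_empty_iff_forall_notMem]
  rintro (x | ⟨n, x, hx⟩) hγ
  · exact interior_subset hγ ⟨x, rfl⟩
  · set V := sheet (n + 1) ⁻¹' interior (range (unit : X → BaireGroupoid C))ᶜ
    have hVC : V ⊆ C n := fun y hy => by
      by_contra hyn
      exact interior_subset hy ⟨y, by simp [sheet, hyn]⟩
    have hxV : x ∈ V := by simpa [V, sheet, hx] using hγ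
    have hx_int := interior_maximal hVC (isOpen_interior.preimage (continuous_sheet _)) hxV
    simp [hCi n] at hx_int

theorem iUnion_subset_preimage_isotropy :
    ⋃ n, C n ⊆ unitsHomeomorph ⁻¹'
      {p : range (unit : X → BaireGroupoid C) |
        ∃ γ, γ ∉ range unit ∧ rg γ = (p : BaireGroupoid C) ∧ rg γ = (p : BaireGroupoid C)} := by
  intro x hx
  obtain ⟨n, hn⟩ := mem_iUnion.1 hx
  exact ⟨arr n x hn, by simp, rfl, rfl⟩

end BaireGroupoid

open BaireGroupoid in
/-- If every topological groupoid whose unit space admits a compatible complete metric and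
which has a countable cover by neighbourhood bisections satisfies "effective implies
topologically principal", then the Baire Category Theorem holds. -/
theorem baire_category_of_effective_implies_principal
    (H : ∀ (G : Type u) [TopologicalSpace G] (G0 : Set G) (r s : G → G),
      Continuous r → Continuous s →
      (∀ γ : G, r γ ∈ G0) → (∀ γ : G, s γ ∈ G0) →
      (∀ x ∈ G0, r x = x) → (∀ x ∈ G0, s x = x) →
      (∃ m : MetricSpace ↥G0,
        m.toUniformSpace.toTopologicalSpace = (inferInstance : TopologicalSpace ↥G0) ∧
        @CompleteSpace ↥G0 m.toUniformSpace) →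
      (∃ B : ℕ → Set G, (∀ n, IsNbhdBisection G0 r s (B n)) ∧ ⋃ n, B n = Set.univ) →
      interior ({γ : G | r γ = s γ} \ G0) = ∅ →
      interior {x : ↥G0 | ∃ γ : G, γ ∉ G0 ∧ r γ = ↑x ∧ s γ = ↑x} = ∅)
    (X : Type u) [MetricSpace X] [CompleteSpace X]
    (C : ℕ → Set X) (hC : ∀ n, IsClosed (C n)) (hCi : ∀ n, interior (C n) = ∅) :
    interior (⋃ n, C n) = ∅ := by
  have hrg_units : ∀ γ ∈ range (unit : X → BaireGroupoid C), rg γ = γ :=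
    forall_mem_range.2 fun _ => rfl
  have hprincipal := H (BaireGroupoid C) (range unit) rg rg continuous_rg continuous_rg
    (fun _ => mem_range_self _) (fun _ => mem_range_self _) hrg_units hrg_units
    IsCompletelyMetrizableSpace.complete
    ⟨_, fun n => (isOpenBisection_range_sheet hC n).isNbhdBisection _, iUnion_range_sheet⟩
    (by simp only [ofPred_true, ← compl_eq_univ_sdiff, interior_eq_empty_iff_dense_compl,
      compl_compl]; exact dense_range_unit hCi)
  refine subset_empty_iff.1 ?_
  calc interior (⋃ n, C n) ⊆ interior (unitsHomeomorph ⁻¹' _) :=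
        interior_mono iUnion_subset_preimage_isotropy
    _ = ∅ := by rw [← Homeomorph.preimage_interior, hprincipal, preimage_empty]
end

section
/- Let G be a topological space with data (G⁰, r, s) as in the groupoid encoding, and suppose r is an open map in the sense that r(U) is open in the subspace G⁰ for every open U ⊆ G. If G is topologically principal, then G is effective. -/
/-- If `r` is an open map (images of open sets are open in the subspace `G⁰`) and `G` is
topologically principal, then `G` is effective. -/
theorem effective_of_topologically_principal
    {G : Type*} [TopologicalSpace G] (G0 : Set G) (r s : G → G)
    (hr : Continuous r) (hs : Continuous s)
    (hrmem : ∀ γ : G, r γ ∈ G0) (hsmem : ∀ γ : G, s γ ∈ G0)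
    (hrid : ∀ x ∈ G0, r x = x) (hsid : ∀ x ∈ G0, s x = x)
    (hropen : ∀ U : Set G, IsOpen U →
      IsOpen ((Subtype.val ⁻¹' (r '' U)) : Set ↥G0))
    (htp : interior {x : ↥G0 | ∃ γ : G, γ ∉ G0 ∧ r γ = ↑x ∧ s γ = ↑x} = ∅) :
    interior ({γ : G | r γ = s γ} \ G0) = ∅ := by
  rw [Set.eq_empty_iff_forall_notMem]
  intro γ hγ
  set U := interior ({γ : G | r γ = s γ} \ G0) with hUdef
  have hV : IsOpen ((Subtype.val ⁻¹' (r '' U)) : Set ↥G0) := hropen U isOpen_interior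
  have hsub : ((Subtype.val ⁻¹' (r '' U)) : Set ↥G0) ⊆
      {x : ↥G0 | ∃ δ : G, δ ∉ G0 ∧ r δ = ↑x ∧ s δ = ↑x} := by
    rintro x ⟨δ, hδ, hrx⟩
    have hδ' := interior_subset hδ
    exact ⟨δ, hδ'.2, hrx, by rw [← hδ'.1]; exact hrx⟩
  have hmem : (⟨r γ, hrmem γ⟩ : ↥G0) ∈ ((Subtype.val ⁻¹' (r '' U)) : Set ↥G0) :=
    ⟨γ, hγ, rfl⟩
  have := interior_maximal hsub hV hmem
  rw [htp] at this
  exact this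
end
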